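/- arXiv:1909.13514 — 5 statements merged into one kernel-verified Lean document; each statement's English description precedes it below -/
import Mathlib

section
/- Let the language P contain a constant 0 and a unary function symbol S (among possibly other symbols), and let Num(x) denote the formula 0 ≐ S(0) → 0 ≐ x. Then for a closed term a, the formula Num(a) is valid in all structures if and only if a is of the form Sᵐ(0) for some m ≥ 0. -/
open FirstOrder Language

def L : FirstOrder.Language := ⟨fun _ => ℕ, fun _ => ℕ⟩

abbrev CTerm : Type := L.Term Empty

def kC {α : Type} (n : ℕ) : L.Term α := Term.func (n : L.Functions 0) ![]
def Sf {α : Type} (t : L.Term α) : L.Term α := Term.func ((0 : ℕ) : L.Functions 1) ![t]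
def Snum {α : Type} : ℕ → L.Term α → L.Term α
  | 0, t => t
  | m+1, t => Sf (Snum m t)
def pairT {α : Type} (t u : L.Term α) : L.Term α := Term.func ((0 : ℕ) : L.Functions 2) ![t, u]

def Valid {L' : FirstOrder.Language} (φ : L'.Sentence) : Prop :=
  ∀ (M : Type) [L'.Structure M] [Nonempty M], M ⊨ φ

def J (j k : ℕ) : ℕ := (j + k) * (j + k + 1) + k + 1

/-- Num(a) is the formula 0 ≐ S(0) → 0 ≐ a. -/
def NumF (a : CTerm) : L.Sentence :=
  (Term.equal (kC 0) (Sf (kC 0))).imp (Term.equal (kC 0) a)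


/- The two-element model: `false` plays `0`, `S` is the identity and every other
function symbol is constantly `true`. -/
def collapseFunMap : (n : ℕ) → ℕ → (Fin n → Bool) → Bool
  | 0, 0, _ => false
  | 1, 0, ts => ts 0
  | _, _, _ => true

instance : L.Structure Bool := ⟨fun {n} f ts => collapseFunMap n f ts, fun _ _ => False⟩

section Realize

variable {M α β : Type} [L.Structure M]

theorem realize_Sf (v : α → M) (t : L.Term α) :
    (Sf t).realize v = Structure.funMap (L := L) (0 : ℕ) ![t.realize v] :=
  Term.realize_functions_apply₁

theorem realize_Sf_congr {v : α → M} {w : β → M} {t : L.Term α} {u : L.Term β}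
    (h : t.realize v = u.realize w) : (Sf t).realize v = (Sf u).realize w := by
  rw [realize_Sf, realize_Sf, h]

theorem realize_Snum_of_realize_Sf_eq {v : α → M} {t : L.Term α}
    (h : (Sf t).realize v = t.realize v) (m : ℕ) : (Snum m t).realize v = t.realize v := by
  induction m with
  | zero => rfl
  | succ m ih => exact (realize_Sf_congr ih).trans h

end Realize

theorem exists_eq_Snum_of_realize_bool_eq_false (v : Empty → Bool) :
    ∀ t : CTerm, t.realize v = false → ∃ m : ℕ, t = Snum m (kC 0)
  | .var x, _ => x.elim
  | .func (l := 0) (0 : ℕ) ts, _ => ⟨0, congrArg _ (Subsingleton.elim ts _)⟩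
  | .func (l := 1) (0 : ℕ) ts, h => by
    obtain ⟨m, hm⟩ := exists_eq_Snum_of_realize_bool_eq_false v (ts 0) h
    refine ⟨m + 1, ?_⟩
    rw [Snum, ← hm, Sf]
    exact congrArg _ (funext fun i => by rw [Subsingleton.elim i 0]; rfl)
  | .func (l := 0) (_ + 1 : ℕ) _, h => by cases h
  | .func (l := 1) (_ + 1 : ℕ) _, h => by cases h
  | .func (l := _ + 2) _ _, h => by cases h

theorem stmt_5 (a : CTerm) : Valid (NumF a) ↔ ∃ m : ℕ, a = Snum m (kC 0) := by
  simp only [Valid, NumF, Sentence.Realize, Formula.realize_imp, Formula.realize_equal]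
  constructor
  · exact fun h => exists_eq_Snum_of_realize_bool_eq_false _ a (h Bool rfl).symm
  · rintro ⟨m, rfl⟩ M _ _ h0
    exact (realize_Snum_of_realize_Sf_eq h0.symm m).symm
end

section
/- Let 0 and 0̃ be distinct constants, S a unary function symbol, and Plus(x,y,z) the formula 0̃ ≐ x → z ≐ y. Then Plus(Sᵐ(0), Sᵖ(0̃), Sᵠ(0)) is valid if and only if q = m + p. -/
open FirstOrder Language

/-- Plus(x,y,z) is the formula 0̃ ≐ x → z ≐ y, where 0 and 0̃ are the distinct
constants with indices 0 and 1. -/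
def PlusF (x y z : CTerm) : L.Sentence :=
  (Term.equal (kC 1) x).imp (Term.equal z y)

/-! If `0̃ = Sᵐ(0)` in a structure, then `S^(m+p)(0) = Sᵖ(Sᵐ(0)) = Sᵖ(0̃)`, so the formula is
valid when `q = m + p`. Conversely, interpret `S` as the successor on `ℕ`, `0` as `0` and `0̃`
as `m`: the antecedent holds, and the consequent reads `q = m + p`. -/

def succFun (M : Type) [L.Structure M] (x : M) : M :=
  Structure.funMap (L := L) ((0 : ℕ) : L.Functions 1) ![x]

theorem realize_Snum {M α : Type} [L.Structure M] (v : α → M) (n : ℕ) (t : L.Term α) :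
    (Snum n t).realize v = (succFun M)^[n] (t.realize v) := by
  induction n with
  | zero => rfl
  | succ n ih =>
    rw [Function.iterate_succ_apply', ← ih]
    simp only [Snum, Sf, Term.realize, succFun]
    exact congrArg _ (funext fun i => by fin_cases i; rfl)

theorem realize_plusF {M : Type} [L.Structure M] (x y z : CTerm) :
    M ⊨ PlusF x y z ↔
      ((kC 1).realize (default : Empty → M) = x.realize default →
        z.realize (default : Empty → M) = y.realize default) := by
  simp only [PlusF, Sentence.Realize, Formula.realize_imp, Formula.realize_equal]

theorem valid_plusF_of_eq_add {m p q : ℕ} (h : q = m + p) :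
    Valid (PlusF (Snum m (kC 0)) (Snum p (kC 1)) (Snum q (kC 0))) := by
  intro M _ _
  simp only [realize_plusF, realize_Snum]
  intro h1
  rw [h, add_comm, Function.iterate_add_apply, ← h1]

@[reducible] def shiftedNatStructure (m : ℕ) : L.Structure ℕ where
  funMap {n} f x := match n, f, x with
    | 0, c, _ => if (show ℕ from c) = 1 then m else 0
    | 1, _, x => x 0 + 1
    | _ + 2, _, _ => 0
  RelMap _ _ := False

theorem realize_Snum_shiftedNat (m : ℕ) {α : Type} (v : α → ℕ) (n : ℕ) (t : L.Term α) :
    letI := shiftedNatStructure m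
    (Snum n t).realize v = t.realize v + n :=
  letI := shiftedNatStructure m
  (realize_Snum ..).trans (Nat.succ_iterate _ n)

theorem realize_kC_shiftedNat (m : ℕ) {α : Type} (v : α → ℕ) (n : ℕ) :
    letI := shiftedNatStructure m
    (kC n).realize v = if n = 1 then m else 0 :=
  rfl

theorem eq_add_of_valid_plusF {m p q : ℕ}
    (h : Valid (PlusF (Snum m (kC 0)) (Snum p (kC 1)) (Snum q (kC 0)))) : q = m + p := by
  let := shiftedNatStructure m
  have := (realize_plusF (M := ℕ) _ _ _).1 (h ℕ)
  simpa [realize_Snum_shiftedNat, realize_kC_shiftedNat] using this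

theorem stmt_7 (m p q : ℕ) :
    Valid (PlusF (Snum m (kC 0)) (Snum p (kC 1)) (Snum q (kC 0))) ↔ q = m + p :=
  ⟨eq_add_of_valid_plusF, valid_plusF_of_eq_add⟩
end

section
/- Let 0, 0̂, 0̃, k, k̃ be distinct constants and SimT(x,y) the formula 0 ≐ 0̂ ∧ 0 ≐ 0̃ ∧ k ≐ k̃ → x ≐ y. Then for semitables a(x,y,z) and b(x,y,z), the formula SimT(a(0,0,k), b(0̂,0̃,k̃)) is valid if and only if a(x,y,z) = b(x,y,z) as semiterms. -/
open FirstOrder Language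

/-- Semitables over the variables x, y, z (encoded as Fin 3). -/
inductive IsSemitable : L.Term (Fin 3) → Prop
  | base : IsSemitable (Term.var 2)
  | step (p q : ℕ) (a : L.Term (Fin 3)) : IsSemitable a →
      IsSemitable (pairT (pairT (Snum p (Term.var 0)) (Snum q (Term.var 1))) a)

/-- SimT(x,y) is the formula 0 ≐ 0̂ ∧ 0 ≐ 0̃ ∧ k ≐ k̃ → x ≐ y, where
0, 0̂, 0̃, k, k̃ are the distinct constants of indices 0, 1, 2, 3, 4. -/
def SimTF (x y : CTerm) : L.Sentence :=
  ((Term.equal (kC 0) (kC 1)) ⊓ (Term.equal (kC 0) (kC 2)) ⊓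
    (Term.equal (kC 3) (kC 4))).imp (Term.equal x y)

/-!
Under the premise of `SimT` the substitutions `(0, 0, k)` and `(0̂, 0̃, k̃)` denote the same
assignment, so equal semitables give a valid formula. Conversely, evaluate in the structure
where `0, 0̂, 0̃` all denote the numeral `0`, `k, k̃` an atom, `S` is the successor on numerals and
`⋅` is free pairing: the premise holds there, and the value of a semitable at `(0, 0, k)` lists its
exponent pairs `(pᵢ, qᵢ)`, so it determines the semitable.
-/

inductive SemitableValue : Type
  | num : ℕ → SemitableValue
  | atom : SemitableValue
  | pair : SemitableValue → SemitableValue → SemitableValue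

namespace SemitableValue

def succ : SemitableValue → SemitableValue
  | num n => num (n + 1)
  | w => w

def funMap : (n : ℕ) → ℕ → (Fin n → SemitableValue) → SemitableValue
  | 0, c, _ => if c ≤ 2 then num 0 else atom
  | 1, _, v => succ (v 0)
  | 2, _, v => pair (v 0) (v 1)
  | _ + 3, _, _ => atom

instance : Nonempty SemitableValue := ⟨atom⟩

instance : L.Structure SemitableValue where
  funMap {n} f v := funMap n f v
  RelMap _ _ := True

lemma realize_Snum {α : Type} {t : L.Term α} {v : α → SemitableValue} {n : ℕ}
    (ht : t.realize v = num n) (p : ℕ) : (Snum p t).realize v = num (n + p) := by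
  induction p with
  | zero => exact ht
  | succ p ih => exact congrArg succ ih

lemma realize_pairT {α : Type} (t u : L.Term α) (v : α → SemitableValue) :
    (pairT t u).realize v = pair (t.realize v) (u.realize v) := rfl

def semitableAssignment : Fin 3 → SemitableValue := ![num 0, num 0, atom]

lemma realize_semitable_step (p q : ℕ) (a : L.Term (Fin 3)) :
    (pairT (pairT (Snum p (Term.var 0)) (Snum q (Term.var 1))) a).realize semitableAssignment =
      pair (pair (num p) (num q)) (a.realize semitableAssignment) := by
  have hx : (Term.var 0 : L.Term (Fin 3)).realize semitableAssignment = num 0 := rfl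
  have hy : (Term.var 1 : L.Term (Fin 3)).realize semitableAssignment = num 0 := rfl
  rw [realize_pairT, realize_pairT, realize_Snum hx, realize_Snum hy, zero_add, zero_add]

lemma eq_of_realize_eq {a b : L.Term (Fin 3)} (ha : IsSemitable a) (hb : IsSemitable b)
    (h : a.realize semitableAssignment = b.realize semitableAssignment) : a = b := by
  induction ha generalizing b with
  | base =>
    cases hb with
    | base => rfl
    | step p q b _ =>
      rw [realize_semitable_step] at h
      simp [semitableAssignment] at h
  | step p q a _ ih =>
    cases hb with
    | base =>
      rw [realize_semitable_step] at h
      simp [semitableAssignment] at h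
    | step p' q' b hb =>
      simp only [realize_semitable_step, pair.injEq, num.injEq] at h
      obtain ⟨⟨rfl, rfl⟩, h⟩ := h
      rw [ih hb h]

lemma realize_subst_semitableAssignment (t : L.Term (Fin 3)) {c₀ c₁ k : ℕ}
    (hc₀ : c₀ ≤ 2) (hc₁ : c₁ ≤ 2) (hk : 2 < k) :
    (t.subst ![kC c₀, kC c₁, kC k]).realize (default : Empty → SemitableValue) =
      t.realize semitableAssignment := by
  rw [Term.realize_subst]
  congr 1
  funext i
  fin_cases i <;> simp [Term.realize, kC, Structure.funMap, funMap, semitableAssignment, *]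

lemma eq_of_valid_simTF {a b : L.Term (Fin 3)} (ha : IsSemitable a) (hb : IsSemitable b)
    (hvalid : Valid (SimTF (a.subst ![kC 0, kC 0, kC 3]) (b.subst ![kC 1, kC 2, kC 4]))) :
    a = b := by
  have hpremise := hvalid SemitableValue
  simp only [SimTF, Sentence.Realize, Formula.realize_imp, Formula.realize_inf,
    Formula.realize_equal] at hpremise
  have h := hpremise ⟨⟨rfl, rfl⟩, rfl⟩
  rw [realize_subst_semitableAssignment a (by decide) (by decide) (by decide),
    realize_subst_semitableAssignment b (by decide) (by decide) (by decide)] at h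
  exact eq_of_realize_eq ha hb h

end SemitableValue

lemma realize_simTF_subst_self (a : L.Term (Fin 3)) (M : Type) [L.Structure M] :
    M ⊨ SimTF (a.subst ![kC 0, kC 0, kC 3]) (a.subst ![kC 1, kC 2, kC 4]) := by
  simp only [SimTF, Sentence.Realize, Formula.realize_imp, Formula.realize_inf,
    Formula.realize_equal, Term.realize_subst]
  rintro ⟨⟨h₀₁, h₀₂⟩, h₃₄⟩
  congr 1
  funext i
  fin_cases i <;> simp_all

theorem stmt_10 (a b : L.Term (Fin 3)) (ha : IsSemitable a) (hb : IsSemitable b) :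
    Valid (SimTF (a.subst ![kC 0, kC 0, kC 3]) (b.subst ![kC 1, kC 2, kC 4])) ↔
      a = b :=
  ⟨SemitableValue.eq_of_valid_simTF ha hb, by rintro rfl M _ _; exact realize_simTF_subst_self a M⟩
end

section
/- Define (m,p)-semitables inductively: z is the (m,0)-semitable, and if a(x,y,z) is an (m,p)-semitable then (Sᵖ(x) ⋅ S^{m·p}(y)) ⋅ a(x,y,z) is an (m,p+1)-semitable. Then for a semitable a(x,y,z): a(S(0), Sᵐ(0), (0⋅0)⋅k) = (Sᵖ(0) ⋅ Sᵠ(0)) ⋅ a(0,0,k) as terms if and only if q = m·p and a(x,y,z) is an (m,p)-semitable. -/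
/-!
Substituting `x := S(0)`, `y := Sᵐ(0)`, `z := (0⋅0)⋅k` shifts every row `Sᵖ(x)⋅S^q(y)` of a
semitable to `S^{p+1}(0)⋅S^{q+m}(0)`, while the new last row `(0⋅0)` plays the role of the
row `(S⁰(0)⋅S⁰(0))`. Hence the substituted table equals `(Sᵖ(0)⋅S^q(0))` followed by the table
at `x = y = 0` exactly when the rows, read from the bottom, are `(S^j(x)⋅S^{m·j}(y))` for
`j = 0, 1, …, p - 1`; both directions go by induction on the table.
-/

open FirstOrder Language

/-- (m,p)-semitables: z is the (m,0)-semitable, and if a is an (m,p)-semitable then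
(Sᵖ(x) ⋅ S^{m·p}(y)) ⋅ a is an (m,p+1)-semitable. -/
inductive IsMPSemitable (m : ℕ) : ℕ → L.Term (Fin 3) → Prop
  | base : IsMPSemitable m 0 (Term.var 2)
  | step (p : ℕ) (a : L.Term (Fin 3)) : IsMPSemitable m p a →
      IsMPSemitable m (p + 1)
        (pairT (pairT (Snum p (Term.var 0)) (Snum (m * p) (Term.var 1))) a)

section Terms

variable {α β : Type}

@[simp]
lemma pairT_subst (t u : L.Term α) (σ : α → L.Term β) :
    (pairT t u).subst σ = pairT (t.subst σ) (u.subst σ) := by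
  simp only [pairT, Term.subst]
  congr 1
  funext i
  fin_cases i <;> rfl

@[simp]
lemma Sf_subst (t : L.Term α) (σ : α → L.Term β) : (Sf t).subst σ = Sf (t.subst σ) := by
  simp only [Sf, Term.subst]
  congr 1
  funext i
  fin_cases i
  rfl

@[simp]
lemma Snum_subst (n : ℕ) (t : L.Term α) (σ : α → L.Term β) :
    (Snum n t).subst σ = Snum n (t.subst σ) := by
  induction n with
  | zero => rfl
  | succ n ih => simp only [Snum, Sf_subst, ih]

lemma Snum_add (a b : ℕ) (t : L.Term α) : Snum (a + b) t = Snum a (Snum b t) := by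
  induction a with
  | zero => simp only [Nat.zero_add, Snum]
  | succ a ih => rw [Nat.succ_add, Snum, ih, Snum]

lemma pairT_inj {t u t' u' : L.Term α} : pairT t u = pairT t' u' ↔ t = t' ∧ u = u' := by
  constructor
  · intro h
    injection h with _ _ h
    exact ⟨congrFun h 0, congrFun h 1⟩
  · rintro ⟨rfl, rfl⟩
    rfl

lemma Sf_injective : Function.Injective (Sf : L.Term α → L.Term α) := by
  intro t t' h
  injection h with _ _ h
  exact congrFun h 0

lemma Sf_ne_kC (t : L.Term α) (n : ℕ) : Sf t ≠ kC n := by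
  intro h
  injection h
  omega

lemma Snum_kC_inj {n n' k : ℕ} : Snum n (kC k : L.Term α) = Snum n' (kC k) ↔ n = n' := by
  refine ⟨fun h => ?_, fun h => h ▸ rfl⟩
  induction n generalizing n' with
  | zero => cases n' with
    | zero => rfl
    | succ n' => exact absurd h.symm (Sf_ne_kC _ _)
  | succ n ih => cases n' with
    | zero => exact absurd h (Sf_ne_kC _ _)
    | succ n' => rw [ih (Sf_injective h)]

end Terms

-- The closed term `k` of the paper is `kC 1` here.
def shiftSubst (m : ℕ) : Fin 3 → CTerm :=
  ![Sf (kC 0), Snum m (kC 0), pairT (pairT (kC 0) (kC 0)) (kC 1)]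

def zeroSubst : Fin 3 → CTerm := ![kC 0, kC 0, kC 1]

lemma row_subst_shiftSubst (m p q : ℕ) (a : L.Term (Fin 3)) :
    (pairT (pairT (Snum p (Term.var 0)) (Snum q (Term.var 1))) a).subst (shiftSubst m) =
      pairT (pairT (Snum (p + 1) (kC 0)) (Snum (q + m) (kC 0))) (a.subst (shiftSubst m)) := by
  simp only [pairT_subst, Snum_subst, Term.subst, Snum_add]
  rfl

lemma row_subst_zeroSubst (p q : ℕ) (a : L.Term (Fin 3)) :
    (pairT (pairT (Snum p (Term.var 0)) (Snum q (Term.var 1))) a).subst zeroSubst =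
      pairT (pairT (Snum p (kC 0)) (Snum q (kC 0))) (a.subst zeroSubst) := by
  simp only [pairT_subst, Snum_subst, Term.subst]
  rfl

lemma IsMPSemitable.subst_shiftSubst {m p : ℕ} {a : L.Term (Fin 3)} (h : IsMPSemitable m p a) :
    a.subst (shiftSubst m) =
      pairT (pairT (Snum p (kC 0)) (Snum (m * p) (kC 0))) (a.subst zeroSubst) := by
  induction h with
  | base => rfl
  | step p b _ ih =>
    rw [row_subst_shiftSubst, row_subst_zeroSubst, ih, Nat.mul_succ]

lemma IsSemitable.isMPSemitable_of_subst_eq {m p q : ℕ} {a : L.Term (Fin 3)}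
    (ha : IsSemitable a)
    (h : a.subst (shiftSubst m) =
      pairT (pairT (Snum p (kC 0)) (Snum q (kC 0))) (a.subst zeroSubst)) :
    q = m * p ∧ IsMPSemitable m p a := by
  induction ha generalizing p q with
  | base =>
    change pairT (pairT (Snum 0 (kC 0)) (Snum 0 (kC 0))) (kC 1) = _ at h
    obtain ⟨⟨hp, hq⟩, -⟩ := by simpa only [pairT_inj, Snum_kC_inj] using h
    subst hp hq
    exact ⟨rfl, .base⟩
  | step p' q' b _ ih =>
    rw [row_subst_shiftSubst, row_subst_zeroSubst, pairT_inj, pairT_inj, Snum_kC_inj,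
      Snum_kC_inj] at h
    obtain ⟨⟨rfl, rfl⟩, hb⟩ := h
    obtain ⟨rfl, hmp⟩ := ih hb
    exact ⟨(Nat.mul_succ m p').symm, .step p' b hmp⟩

theorem stmt_11 (m p q : ℕ) (a : L.Term (Fin 3)) (ha : IsSemitable a) :
    a.subst (![Sf (kC 0), Snum m (kC 0), pairT (pairT (kC 0) (kC 0)) (kC 1)] : Fin 3 → CTerm) =
        pairT (pairT (Snum p (kC 0)) (Snum q (kC 0))) (a.subst (![kC 0, kC 0, kC 1] : Fin 3 → CTerm)) ↔
      q = m * p ∧ IsMPSemitable m p a := by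
  constructor
  · exact ha.isMPSemitable_of_subst_eq
  · rintro ⟨rfl, hmp⟩
    exact hmp.subst_shiftSubst
end

section
/- For every quantifier-free formula φ in a first-order language with equality, φ is valid (true in all structures) if and only if φ is a quasitautology, i.e., a propositional tautological consequence of finitely many instances of the identity axioms (reflexivity for constants, symmetry, transitivity, and function/predicate congruence). -/
open FirstOrder Language

/-- A propositional valuation of the atomic formulas: truth values for identity
atoms between closed terms and for predicate atoms on closed terms. -/
structure AtomValuation where
  ve : L.Term (Empty ⊕ Fin 0) → L.Term (Empty ⊕ Fin 0) → Prop
  vr : ∀ n, L.Relations n → (Fin n → L.Term (Empty ⊕ Fin 0)) → Prop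

/-- The valuation satisfies all instances of the identity axioms: reflexivity for
constants, symmetry, transitivity, and function/predicate congruence. -/
def AtomValuation.IdOk (V : AtomValuation) : Prop :=
  (∀ k : L.Functions 0, V.ve (Term.func k ![]) (Term.func k ![])) ∧
  (∀ a b, V.ve a b → V.ve b a) ∧
  (∀ a b c, V.ve a b → V.ve b c → V.ve a c) ∧
  (∀ (n : ℕ) (f : L.Functions n) (as bs : Fin n → L.Term (Empty ⊕ Fin 0)),
    (∀ i, V.ve (as i) (bs i)) → V.ve (Term.func f as) (Term.func f bs)) ∧
  (∀ (n : ℕ) (R : L.Relations n) (as bs : Fin n → L.Term (Empty ⊕ Fin 0)),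
    (∀ i, V.ve (as i) (bs i)) → V.vr n R as → V.vr n R bs)

/-- Propositional evaluation of a quantifier-free formula under a valuation of
its atoms (the value on quantified formulas is irrelevant). -/
def AtomValuation.Eval (V : AtomValuation) : L.BoundedFormula Empty 0 → Prop
  | .falsum => False
  | .equal t₁ t₂ => V.ve t₁ t₂
  | .rel R ts => V.vr _ R ts
  | .imp φ ψ => V.Eval φ → V.Eval ψ
  | .all _ => True

/-- φ is a quasitautology: it holds under every propositional valuation of its
atoms that satisfies the identity axioms. -/
def Quasitautology (φ : L.Formula Empty) : Prop :=
  ∀ V : AtomValuation, V.IdOk → V.Eval φ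


/-!
A structure `M` induces a valuation of the closed atoms (an equation is true iff both sides
denote the same element) which satisfies the identity axioms and agrees with `M` on every
quantifier-free sentence; so quasitautologies are valid. Conversely, a valuation `V` satisfying
the identity axioms turns `V.ve` into a congruence on the closed terms, and the quotient term
model realizes exactly the quantifier-free sentences that `V` makes true; so a valid sentence is
a quasitautology.
-/

open Structure

namespace AtomValuation

abbrev ClosedTerm : Type := L.Term (Empty ⊕ Fin 0)

theorem eval_iff_realize {M : Type} [L.Structure M] (V : AtomValuation)
    (w : Empty → M) (xs : Fin 0 → M)
    (hve : ∀ t₁ t₂ : ClosedTerm,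
      V.ve t₁ t₂ ↔ t₁.realize (Sum.elim w xs) = t₂.realize (Sum.elim w xs))
    (hvr : ∀ n (R : L.Relations n) (ts : Fin n → ClosedTerm),
      V.vr n R ts ↔ RelMap R fun i => (ts i).realize (Sum.elim w xs))
    {φ : L.BoundedFormula Empty 0} (hφ : φ.IsQF) :
    V.Eval φ ↔ φ.Realize w xs := by
  induction hφ with
  | falsum => simp only [Eval, BoundedFormula.Realize]
  | of_isAtomic hat =>
    cases hat with
    | equal t₁ t₂ => simpa only [Term.bdEqual, Eval, BoundedFormula.Realize] using hve t₁ t₂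
    | rel R ts =>
      simpa only [Relations.boundedFormula, Eval, BoundedFormula.Realize] using hvr _ R ts
  | imp _ _ ih₁ ih₂ => simpa only [Eval, BoundedFormula.Realize] using imp_congr ih₁ ih₂

section OfStructure

variable (M : Type) [L.Structure M]

def ofStructure : AtomValuation where
  ve t₁ t₂ :=
    t₁.realize (Sum.elim default default : _ → M) = t₂.realize (Sum.elim default default)
  vr _ R ts := RelMap R fun i => (ts i).realize (Sum.elim default default : _ → M)

theorem idOk_ofStructure : (ofStructure M).IdOk := by
  refine ⟨fun _ => rfl, fun _ _ => Eq.symm, fun _ _ _ => Eq.trans, ?_, ?_⟩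
  · intro n f as bs h
    simp only [ofStructure, Term.realize_func, funext h]
  · intro n R as bs h hR
    simpa only [ofStructure, ← funext h] using hR

theorem eval_ofStructure_iff {φ : L.Sentence} (hφ : φ.IsQF) :
    (ofStructure M).Eval φ ↔ M ⊨ φ :=
  eval_iff_realize _ _ _ (fun _ _ => Iff.rfl) (fun _ _ _ => Iff.rfl) hφ

end OfStructure

section TermModel

variable {V : AtomValuation}

theorem IdOk.symm (hV : V.IdOk) {a b : ClosedTerm} : V.ve a b → V.ve b a := hV.2.1 a b

theorem IdOk.trans (hV : V.IdOk) {a b c : ClosedTerm} : V.ve a b → V.ve b c → V.ve a c :=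
  hV.2.2.1 a b c

theorem IdOk.func_congr (hV : V.IdOk) {n : ℕ} (f : L.Functions n) {as bs : Fin n → ClosedTerm}
    (h : ∀ i, V.ve (as i) (bs i)) : V.ve (Term.func f as) (Term.func f bs) :=
  hV.2.2.2.1 n f as bs h

theorem IdOk.rel_congr (hV : V.IdOk) {n : ℕ} (R : L.Relations n) {as bs : Fin n → ClosedTerm}
    (h : ∀ i, V.ve (as i) (bs i)) : V.vr n R as → V.vr n R bs :=
  hV.2.2.2.2 n R as bs h

theorem IdOk.refl (hV : V.IdOk) (t : ClosedTerm) : V.ve t t := by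
  induction t with
  | var x => exact isEmptyElim x
  | func f ts ih => exact hV.func_congr f ih

variable (hV : V.IdOk)

def termSetoid : Setoid ClosedTerm :=
  ⟨V.ve, ⟨hV.refl, hV.symm, hV.trans⟩⟩

abbrev TermModel : Type := Quotient (termSetoid hV)

instance : Nonempty (TermModel hV) :=
  ⟨Quotient.mk _ (Term.func ((0 : ℕ) : L.Functions 0) ![])⟩

noncomputable instance : L.Structure (TermModel hV) where
  funMap f xs := Quotient.mk _ (Term.func f fun i => (xs i).out)
  RelMap R xs := V.vr _ R fun i => (xs i).out

theorem ve_out_mk (t : ClosedTerm) : V.ve (Quotient.mk (termSetoid hV) t).out t :=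
  Quotient.mk_out (s := termSetoid hV) t

theorem realize_termModel (v : Empty ⊕ Fin 0 → TermModel hV) (t : ClosedTerm) :
    t.realize v = Quotient.mk _ t := by
  induction t with
  | var x => exact isEmptyElim x
  | func f ts ih =>
    refine Quotient.sound (hV.func_congr f fun i => ?_)
    simpa only [ih i] using ve_out_mk hV (ts i)

theorem eval_iff_termModel_realize {φ : L.Sentence} (hφ : φ.IsQF) :
    V.Eval φ ↔ TermModel hV ⊨ φ := by
  refine eval_iff_realize V _ _ (fun t₁ t₂ => ?_) (fun n R ts => ?_) hφ
  · rw [realize_termModel, realize_termModel]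
    exact (Quotient.eq (r := termSetoid hV)).symm
  · simp only [realize_termModel]
    exact ⟨hV.rel_congr R fun i => hV.symm (ve_out_mk hV (ts i)),
      hV.rel_congr R fun i => ve_out_mk hV (ts i)⟩

end TermModel

end AtomValuation

theorem stmt_17 (φ : L.Formula Empty) (hqf : φ.IsQF) :
    Valid φ ↔ Quasitautology φ := by
  open AtomValuation in
  exact ⟨fun hvalid V hV => (eval_iff_termModel_realize hV hqf).2 (hvalid _),
    fun hquasi M _ _ => (eval_ofStructure_iff M hqf).1 (hquasi _ (idOk_ofStructure M))⟩
end
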